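/- arXiv:1402.6659 — 9 statements merged into one kernel-verified Lean document; each statement's English description precedes it below -/
import Mathlib

section
/- A set is κ-small (has cardinality < κ) if and only if it is a κ-presentable object in the category of sets. -/
universe v u u₂

open CategoryTheory Limits Opposite

noncomputable section

/-- A small category with fewer than `κ` morphisms. -/
def CardSmallCat (K : Type v) [SmallCategory K] (κ : Cardinal.{v}) : Prop :=
  Cardinal.mk (Σ p : K × K, p.1 ⟶ p.2) < κ

/-- `J` is `κ`-filtered: every `κ`-small diagram in `J` admits a cocone. -/
def IsCardFiltered (J : Type v) [SmallCategory J] (κ : Cardinal.{v}) : Prop :=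
  ∀ (K : Type v) [SmallCategory K], CardSmallCat K κ → ∀ F : K ⥤ J, Nonempty (Cocone F)

/-- `A` is `κ`-presentable: `Hom(A,-)` preserves colimits of small `κ`-filtered diagrams. -/
def IsCardPresentable {C : Type u} [Category.{v} C] (κ : Cardinal.{v}) (A : C) : Prop :=
  ∀ (J : Type v) [SmallCategory J], IsCardFiltered J κ →
    Nonempty (PreservesColimitsOfShape J (coyoneda.obj (op A)))

/-- `A` is `(κ, lam)`-presentable: `Hom(A,-)` preserves colimits of `lam`-small
`κ`-filtered diagrams. -/
def IsRelPresentable {C : Type u} [Category.{v} C] (κ lam : Cardinal.{v}) (A : C) : Prop :=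
  ∀ (J : Type v) [SmallCategory J], CardSmallCat J lam → IsCardFiltered J κ →
    Nonempty (PreservesColimitsOfShape J (coyoneda.obj (op A)))

/-- `C` is a `κ`-accessible category. -/
def IsCardAccessible (C : Type u) [Category.{v} C] (κ : Cardinal.{v}) : Prop :=
  (∀ (J : Type v) [SmallCategory J], IsCardFiltered J κ → HasColimitsOfShape J C) ∧
  ∃ G : Set C, Small.{v} G ∧ (∀ A ∈ G, IsCardPresentable κ A) ∧
    ∀ X : C, ∃ (J : Type v) (inst : SmallCategory J) (F : J ⥤ C) (c : Cocone F),
      IsCardFiltered J κ ∧ (∀ j, F.obj j ∈ G) ∧ Nonempty (IsColimit c) ∧ Nonempty (c.pt ≅ X)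

/-- `F` preserves colimits of small `κ`-filtered diagrams. -/
def PreservesCardFiltered {C : Type u} [Category.{v} C] {D : Type u₂} [Category.{v} D]
    (F : C ⥤ D) (κ : Cardinal.{v}) : Prop :=
  ∀ (J : Type v) [SmallCategory J], IsCardFiltered J κ →
    Nonempty (PreservesColimitsOfShape J F)

/-- `F` is a strongly `κ`-accessible functor. -/
def StronglyCardAccessible {C : Type u} [Category.{v} C] {D : Type u₂} [Category.{v} D]
    (F : C ⥤ D) (κ : Cardinal.{v}) : Prop :=
  IsCardAccessible C κ ∧ IsCardAccessible D κ ∧ PreservesCardFiltered F κ ∧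
    ∀ X : C, IsCardPresentable κ X → IsCardPresentable κ (F.obj X)

/-- `κ ◁ lam`: `κ` is sharply less than `lam`. -/
def SharplyLess (κ lam : Cardinal.{u}) : Prop :=
  κ < lam ∧ ∀ X : Type u, Cardinal.mk X < lam →
    ∃ S : Set {s : Set X // Cardinal.mk s < κ},
      Cardinal.mk S < lam ∧ ∀ t : {s : Set X // Cardinal.mk s < κ}, ∃ w ∈ S, t.1 ⊆ w.1

namespace CategoryTheory

variable {K : Type v} [SmallCategory K]

def Arrow.equivSigmaProd : Arrow K ≃ Σ p : K × K, p.1 ⟶ p.2 where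
  toFun f := ⟨(f.left, f.right), f.hom⟩
  invFun x := Arrow.mk x.2
  left_inv _ := rfl
  right_inv _ := rfl

lemma cardSmallCat_iff_hasCardinalLT_arrow (κ : Cardinal.{v}) :
    CardSmallCat K κ ↔ HasCardinalLT (Arrow K) κ := by
  rw [hasCardinalLT_iff_of_equiv Arrow.equivSigmaProd, hasCardinalLT_iff_cardinal_mk_lt,
    CardSmallCat]

lemma isCardFiltered_iff_isCardinalFiltered (κ : Cardinal.{v}) [Fact κ.IsRegular] :
    IsCardFiltered K κ ↔ IsCardinalFiltered K κ := by
  simp only [IsCardFiltered, cardSmallCat_iff_hasCardinalLT_arrow]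
  exact ⟨fun h => ⟨fun F hA => h _ hA F⟩, fun h _ _ hA F => h.nonempty_cocone F hA⟩

lemma isCardPresentable_iff_isCardinalPresentable {C : Type u} [Category.{v} C] (A : C)
    (κ : Cardinal.{v}) [Fact κ.IsRegular] :
    IsCardPresentable κ A ↔ IsCardinalPresentable A κ := by
  simp only [IsCardPresentable, isCardFiltered_iff_isCardinalFiltered]
  exact ⟨fun h => ⟨fun J _ hJ => (h J hJ).some⟩,
    fun h J _ hJ => ⟨Functor.preservesColimitsOfShape_of_isCardinalAccessible _ κ J⟩⟩

end CategoryTheory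

/-- A set is `κ`-small iff it is a `κ`-presentable object of `Set`. -/
theorem stmt1 (κ : Cardinal.{v}) (hκ : κ.IsRegular) (S : Type v) :
    Cardinal.mk S < κ ↔ IsCardPresentable κ S := by
  have : Fact κ.IsRegular := ⟨hκ⟩
  rw [isCardPresentable_iff_isCardinalPresentable, Types.isCardinalPresentable_iff,
    hasCardinalLT_iff_cardinal_mk_lt]
end
end

section
/- For every regular cardinal κ, κ is sharply less than its cardinal successor κ⁺: for every κ⁺-small set X there is a κ⁺-small cofinal subset of the poset of κ-small subsets of X. -/
universe v u u₂

open CategoryTheory Limits Opposite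

noncomputable section

/-!
Embed `X` into the initial ordinal of `κ`. The preimages of its proper initial segments are
`κ`-small and there are only `κ` of them; since `κ` is regular, a `κ`-small subset of `X` has
bounded image, so it lies in one of these preimages.
-/

open Cardinal

theorem Order.exists_forall_lt_of_mk_lt_cof {α : Type*} [LinearOrder α] {s : Set α}
    (hs : #s < Order.cof α) : ∃ b, ∀ a ∈ s, a < b :=
  not_isCofinal_iff.1 fun h => (Order.cof_le h).not_gt hs

theorem Cardinal.mk_preimage_Iio_lt {X : Type u} {c : Cardinal.{u}} {f : X → c.ord.ToType}
    (hf : f.Injective) (b : c.ord.ToType) : #(f ⁻¹' Set.Iio b) < c :=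
  calc #(f ⁻¹' Set.Iio b) ≤ #(Set.Iio b) := mk_preimage_of_injective f _ hf
    _ < #c.ord.ToType := mk_Iio_lt b (by rw [mk_ord_toType, Ordinal.type_toType])
    _ = c := mk_ord_toType c

def initialSegmentPreimage {X : Type u} {c : Cardinal.{u}} {f : X → c.ord.ToType}
    (hf : f.Injective) (b : c.ord.ToType) : {s : Set X // #s < c} :=
  ⟨f ⁻¹' Set.Iio b, mk_preimage_Iio_lt hf b⟩

theorem Cardinal.IsRegular.exists_subset_initialSegmentPreimage {X : Type u} {κ : Cardinal.{u}}
    (hκ : κ.IsRegular) {f : X → κ.ord.ToType} (hf : f.Injective) {t : Set X} (ht : #t < κ) :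
    ∃ b, t ⊆ (initialSegmentPreimage hf b).1 := by
  have hft : #(f '' t) < Order.cof κ.ord.ToType := by
    rw [Ordinal.cof_toType, hκ.cof_ord]
    exact mk_image_le.trans_lt ht
  obtain ⟨b, hb⟩ := Order.exists_forall_lt_of_mk_lt_cof hft
  exact ⟨b, fun x hx => hb (f x) (Set.mem_image_of_mem f hx)⟩

/-- Every regular cardinal is sharply less than its cardinal successor. -/
theorem stmt3 (κ : Cardinal.{u}) (hκ : κ.IsRegular) :
    SharplyLess κ (Order.succ κ) := by
  refine ⟨Order.lt_succ κ, fun X hX => ?_⟩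
  have hXκ : #X ≤ #κ.ord.ToType := by
    rwa [mk_ord_toType, ← Order.lt_succ_iff]
  obtain ⟨f, hf⟩ := hXκ
  refine ⟨Set.range (initialSegmentPreimage hf), ?_, fun t => ?_⟩
  · calc #(Set.range (initialSegmentPreimage hf)) ≤ #κ.ord.ToType := mk_range_le
      _ = κ := mk_ord_toType κ
      _ < Order.succ κ := Order.lt_succ κ
  · obtain ⟨b, hb⟩ := hκ.exists_subset_initialSegmentPreimage hf t.2
    exact ⟨_, Set.mem_range_self b, hb⟩
end
end

section
/- Let C be a κ-accessible category, A a κ-presentable object, and B a λ-presentable object, where κ is sharply less than λ. If for every κ-presentable object A' the hom-set Hom(A, A') has cardinality < μ, then Hom(A, B) has cardinality < max(λ, μ). -/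
universe v u u₂

open CategoryTheory Limits Opposite

noncomputable section

/-!
Write `B` as the colimit of a `κ`-filtered diagram of `κ`-presentable objects and replace the
index category by a cofinal `κ`-directed poset `α`, so that `B = colim_{a ∈ α} G a`. Because
`κ ◁ λ`, the `κ`-directed subsets of `α` of cardinality `< λ` form a `λ`-directed family covering
`α`, and `B` is the `λ`-filtered colimit of the partial colimits over these subsets. As `B` is
`λ`-presentable, its identity factors through one of them: `B` is a retract of `colim_{a ∈ S} G a`
for a `κ`-directed `S` with `|S| < λ` (Makkai–Paré). As `A` is `κ`-presentable, every map from `A`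
to this colimit factors through some `G a`, so `|Hom(A, B)| ≤ ∑_{a ∈ S} |Hom(A, G a)|`, which is
`< max λ μ` by regularity.
-/

lemma cardSmallCat_iff_hasCardinalLT_arrow {K : Type v} [SmallCategory K] {κ : Cardinal.{v}} :
    CardSmallCat K κ ↔ HasCardinalLT (Arrow K) κ := by
  let e : Arrow K ≃ Σ p : K × K, p.1 ⟶ p.2 :=
    { toFun f := ⟨(f.left, f.right), f.hom⟩
      invFun s := Arrow.mk s.2
      left_inv _ := rfl
      right_inv _ := rfl }
  rw [hasCardinalLT_iff_cardinal_mk_lt, CardSmallCat, Cardinal.mk_congr e]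

section Comparison

variable {κ lam : Cardinal.{v}}

lemma SharplyLess.exists_cofinal (h : SharplyLess κ lam) (X : Type v) (hX : HasCardinalLT X lam) :
    ∃ Y : Set (CardinalDirectedPoset.SetCardinalLT κ X), HasCardinalLT Y lam ∧ IsCofinal Y := by
  simp only [hasCardinalLT_iff_cardinal_mk_lt] at hX ⊢
  obtain ⟨S, hS, hcof⟩ := h.2 X hX
  let e : {s : Set X // Cardinal.mk s < κ} → CardinalDirectedPoset.SetCardinalLT κ X :=
    fun s => ⟨s.1, (hasCardinalLT_iff_cardinal_mk_lt _ _).2 s.2⟩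
  refine ⟨e '' S, Cardinal.mk_image_le.trans_lt hS, fun t => ?_⟩
  obtain ⟨w, hw, hsub⟩ := hcof ⟨t.1, (hasCardinalLT_iff_cardinal_mk_lt _ _).1 t.2⟩
  exact ⟨e w, Set.mem_image_of_mem e hw, hsub⟩

variable [Fact κ.IsRegular]

lemma isCardFiltered_iff_isCardinalFiltered {J : Type v} [SmallCategory J] :
    IsCardFiltered J κ ↔ IsCardinalFiltered J κ :=
  ⟨fun h => ⟨fun F hA => h _ (cardSmallCat_iff_hasCardinalLT_arrow.2 hA) F⟩,
    fun h _ _ hK F => h.nonempty_cocone F (cardSmallCat_iff_hasCardinalLT_arrow.1 hK)⟩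

lemma IsCardPresentable.preservesColimitsOfShape {C : Type u} [Category.{v} C] {A : C}
    (hA : IsCardPresentable κ A) (J : Type v) [SmallCategory J] [IsCardinalFiltered J κ] :
    PreservesColimitsOfShape J (coyoneda.obj (op A)) :=
  (hA J (isCardFiltered_iff_isCardinalFiltered.2 ‹_›)).some

end Comparison

section RestrictedColimits

variable {α : Type v} [Preorder α] {C : Type u} [Category.{v} C] (G : α ⥤ C)

-- The constructions below are reducible so that `(restrictToSet G s).obj a` unfolds to
-- `G.obj a.1` during rewriting, which lets colimit maps for different subsets be composed.
abbrev restrictToSet (s : Set α) : s ⥤ C where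
  obj a := G.obj a.1
  map f := G.map (homOfLE (leOfHom f))
  map_id a := G.map_id a.1
  map_comp _ _ := G.map_comp _ _

variable {G}

abbrev restrictCocone (c : Cocone G) (s : Set α) : Cocone (restrictToSet G s) where
  pt := c.pt
  ι :=
    { app a := c.ι.app a.1
      naturality _ _ _ := c.ι.naturality _ }

abbrev coconeOfSubset {s t : Set α} (h : s ⊆ t) [HasColimit (restrictToSet G t)] :
    Cocone (restrictToSet G s) where
  pt := colimit (restrictToSet G t)
  ι :=
    { app a := colimit.ι (restrictToSet G t) ⟨a, Set.mem_of_subset_of_mem h a.2⟩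
      naturality a b f := (colimit.w (restrictToSet G t) (homOfLE (leOfHom f) :
        (⟨a, Set.mem_of_subset_of_mem h a.2⟩ : t) ⟶ ⟨b, Set.mem_of_subset_of_mem h b.2⟩)).trans
          (Category.comp_id _).symm }

variable (G) (𝒮 : Set (Set α)) [∀ s : 𝒮, HasColimit (restrictToSet G s.1)]

abbrev colimitsOnSets : 𝒮 ⥤ C where
  obj s := colimit (restrictToSet G s.1)
  map {s t} h := colimit.desc (restrictToSet G s.1) (coconeOfSubset (leOfHom h))
  map_id s := colimit.hom_ext fun a => (colimit.ι_desc _ _).trans (Category.comp_id _).symm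
  map_comp f g := colimit.hom_ext fun a => by
    rw [colimit.ι_desc, colimit.ι_desc_assoc]
    exact (colimit.ι_desc (coconeOfSubset (G := G) (leOfHom g))
      ⟨a, Set.mem_of_subset_of_mem (leOfHom f) a.2⟩).symm

lemma ι_colimitsOnSets_map {s t : 𝒮} (h : s ≤ t) (a : s.1) :
    colimit.ι (restrictToSet G s.1) a ≫ (colimitsOnSets G 𝒮).map (homOfLE h) =
      colimit.ι (restrictToSet G t.1) ⟨a, Set.mem_of_subset_of_mem h a.2⟩ :=
  colimit.ι_desc _ _

variable {G 𝒮}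

abbrev coconeColimitsOnSets (c : Cocone G) : Cocone (colimitsOnSets G 𝒮) where
  pt := c.pt
  ι :=
    { app s := colimit.desc _ (restrictCocone c s.1)
      naturality s t h := colimit.hom_ext fun a => by
        rw [colimit.ι_desc_assoc, colimit.ι_desc_assoc]
        exact (colimit.ι_desc (restrictCocone c t.1) _).trans (Category.comp_id _).symm }

lemma ι_coconeColimitsOnSets_app (c : Cocone G) (s : 𝒮) (a : s.1) :
    colimit.ι (restrictToSet G s.1) a ≫ (coconeColimitsOnSets (𝒮 := 𝒮) c).ι.app s = c.ι.app a :=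
  colimit.ι_desc _ _

lemma ι_comp_app_eq_of_le (σ : Cocone (colimitsOnSets G 𝒮)) {s t : 𝒮} (h : s ≤ t) (a : s.1) :
    colimit.ι (restrictToSet G s.1) a ≫ σ.ι.app s =
      colimit.ι (restrictToSet G t.1) ⟨a, Set.mem_of_subset_of_mem h a.2⟩ ≫ σ.ι.app t := by
  rw [← σ.w (homOfLE h), ← Category.assoc, ι_colimitsOnSets_map]

lemma ι_comp_app_eq (hdir : DirectedOn (· ⊆ ·) 𝒮) (σ : Cocone (colimitsOnSets G 𝒮))
    {s t : 𝒮} {a : α} (hs : a ∈ s.1) (ht : a ∈ t.1) :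
    colimit.ι (restrictToSet G s.1) ⟨a, hs⟩ ≫ σ.ι.app s =
      colimit.ι (restrictToSet G t.1) ⟨a, ht⟩ ≫ σ.ι.app t := by
  obtain ⟨u, hu, hsu, htu⟩ := hdir s.1 s.2 t.1 t.2
  exact (ι_comp_app_eq_of_le σ (t := ⟨u, hu⟩) hsu ⟨a, hs⟩).trans
    (ι_comp_app_eq_of_le σ (t := ⟨u, hu⟩) htu ⟨a, ht⟩).symm

abbrev coconeOfColimitsOnSets (hdir : DirectedOn (· ⊆ ·) 𝒮) (hcover : ∀ a, ∃ s ∈ 𝒮, a ∈ s)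
    (σ : Cocone (colimitsOnSets G 𝒮)) : Cocone G where
  pt := σ.pt
  ι :=
    { app a := colimit.ι (restrictToSet G (⟨_, (hcover a).choose_spec.1⟩ : 𝒮).1)
        ⟨a, (hcover a).choose_spec.2⟩ ≫ σ.ι.app ⟨_, (hcover a).choose_spec.1⟩
      naturality a b f := by
        obtain ⟨u, hu, hau, hbu⟩ := hdir _ (hcover a).choose_spec.1 _ (hcover b).choose_spec.1
        have hu_a := Set.mem_of_subset_of_mem hau (hcover a).choose_spec.2
        have hu_b := Set.mem_of_subset_of_mem hbu (hcover b).choose_spec.2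
        rw [ι_comp_app_eq hdir σ _ (t := ⟨u, hu⟩) hu_a, ι_comp_app_eq hdir σ _ (t := ⟨u, hu⟩) hu_b,
          ← Category.assoc]
        refine .trans ?_ (Category.comp_id _).symm
        exact congrArg (· ≫ σ.ι.app ⟨u, hu⟩)
          (colimit.w (restrictToSet G (⟨u, hu⟩ : 𝒮).1)
            (homOfLE (leOfHom f) : (⟨a, hu_a⟩ : u) ⟶ ⟨b, hu_b⟩)) }

def isColimitCoconeColimitsOnSets {c : Cocone G} (hc : IsColimit c)
    (hdir : DirectedOn (· ⊆ ·) 𝒮) (hcover : ∀ a, ∃ s ∈ 𝒮, a ∈ s) :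
    IsColimit (coconeColimitsOnSets (𝒮 := 𝒮) c) where
  desc σ := hc.desc (coconeOfColimitsOnSets hdir hcover σ)
  fac σ s := colimit.hom_ext fun a => by
    rw [← Category.assoc, ι_coconeColimitsOnSets_app, hc.fac]
    exact ι_comp_app_eq hdir σ _ _
  uniq σ m hm := hc.hom_ext fun a => by
    rw [hc.fac, ← ι_coconeColimitsOnSets_app c ⟨_, (hcover a).choose_spec.1⟩
      ⟨a, (hcover a).choose_spec.2⟩, Category.assoc, hm]

end RestrictedColimits

section SmallFilteredSets

variable {κ lam : Cardinal.{v}} [Fact κ.IsRegular] [Fact lam.IsRegular] (h : SharplyLess κ lam)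
  {X : Type v} [PartialOrder X] [IsCardinalFiltered X κ]

include h

lemma SharplyLess.exists_isCardinalFiltered_superset (A : Set X) (hA : HasCardinalLT A lam) :
    ∃ B, A ⊆ B ∧ IsCardinalFiltered B κ ∧ HasCardinalLT B lam :=
  Cardinal.SharplyLT.exists_isCardinalFiltered_set_of_exists_cofinal h.1 h.exists_cofinal A hA

variable (κ lam X) in
def smallFilteredSets : Set (Set X) := {S | IsCardinalFiltered S κ ∧ HasCardinalLT S lam}

lemma SharplyLess.isCardinalFiltered_smallFilteredSets :
    IsCardinalFiltered (smallFilteredSets κ lam X) lam :=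
  isCardinalFiltered_preorder _ _ fun K s hK => by
    obtain ⟨B, hsub, hB, hBcard⟩ := h.exists_isCardinalFiltered_superset (⋃ k, (s k).1)
      (hasCardinalLT_iUnion _ ((hasCardinalLT_iff_cardinal_mk_lt _ _).2 hK) fun k => (s k).2.2)
    exact ⟨⟨B, hB, hBcard⟩, fun k => (Set.subset_iUnion (fun k => (s k).1) k).trans hsub⟩

lemma SharplyLess.directedOn_smallFilteredSets :
    DirectedOn (· ⊆ ·) (smallFilteredSets κ lam X) := fun s hs t ht => by
  obtain ⟨B, hsub, hB, hBcard⟩ := h.exists_isCardinalFiltered_superset (s ∪ t)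
    (hasCardinalLT_union (Fact.out : lam.IsRegular).aleph0_le hs.2 ht.2)
  exact ⟨B, ⟨hB, hBcard⟩, Set.subset_union_left.trans hsub, Set.subset_union_right.trans hsub⟩

lemma SharplyLess.exists_mem_smallFilteredSets (x : X) :
    ∃ S ∈ smallFilteredSets κ lam X, x ∈ S := by
  obtain ⟨B, hsub, hB, hBcard⟩ := h.exists_isCardinalFiltered_superset {x}
    (hasCardinalLT_of_finite _ _ (Fact.out : lam.IsRegular).aleph0_le)
  exact ⟨B, ⟨hB, hBcard⟩, hsub rfl⟩

end SmallFilteredSets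

section Counting

variable {C : Type u} [Category.{v} C]

lemma CategoryTheory.Retract.mk_hom_le {X Y : C} (h : Retract X Y) (A : C) :
    Cardinal.mk (A ⟶ X) ≤ Cardinal.mk (A ⟶ Y) :=
  Cardinal.mk_le_of_injective (f := (· ≫ h.i)) fun f g hfg => by
    simpa using congrArg (· ≫ h.r) hfg

lemma mk_hom_le_sum_of_isColimit {J : Type v} [SmallCategory J] {K : J ⥤ C} {c : Cocone K}
    (hc : IsColimit c) (A : C) [PreservesColimit K (coyoneda.obj (op A))] :
    Cardinal.mk (A ⟶ c.pt) ≤ Cardinal.sum fun j => Cardinal.mk (A ⟶ K.obj j) := by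
  rw [← Cardinal.mk_sigma]
  refine Cardinal.mk_le_of_surjective (f := fun x : Σ j, A ⟶ K.obj j => x.2 ≫ c.ι.app x.1)
    fun f => ?_
  obtain ⟨j, p, hp⟩ := exists_hom_of_preservesColimit_coyoneda hc f
  exact ⟨⟨j, p⟩, hp⟩

end Counting

theorem SharplyLess.exists_retract_colimit_restrictToSet {C : Type u} [Category.{v} C]
    {κ lam : Cardinal.{v}} [Fact κ.IsRegular] [Fact lam.IsRegular] (hsharp : SharplyLess κ lam)
    (hco : ∀ (J : Type v) [SmallCategory J], IsCardinalFiltered J κ → HasColimitsOfShape J C)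
    {α : Type v} [PartialOrder α] [IsCardinalFiltered α κ] {G : α ⥤ C}
    {c : Cocone G} (hc : IsColimit c) (hB : IsCardPresentable lam c.pt) :
    ∃ S : Set α, IsCardinalFiltered S κ ∧ HasCardinalLT S lam ∧
      ∃ c' : Cocone (restrictToSet G S),
        Nonempty (IsColimit c') ∧ Nonempty (Retract c.pt c'.pt) := by
  have (S : smallFilteredSets κ lam α) : HasColimit (restrictToSet G S.1) :=
    have := hco S.1 S.2.1
    inferInstance
  have := hsharp.isCardinalFiltered_smallFilteredSets (X := α)
  have := hB.preservesColimitsOfShape (smallFilteredSets κ lam α)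
  obtain ⟨S, i, hi⟩ := exists_hom_of_preservesColimit_coyoneda
    (isColimitCoconeColimitsOnSets hc hsharp.directedOn_smallFilteredSets
      hsharp.exists_mem_smallFilteredSets) (𝟙 c.pt)
  exact ⟨S.1, S.2.1, S.2.2, colimit.cocone _, ⟨colimit.isColimit _⟩, ⟨⟨i, _, hi⟩⟩⟩

/-- Estimate for hom-sets out of a `κ`-presentable object into a `lam`-presentable object. -/
theorem stmt5 {C : Type u} [Category.{v} C] (κ lam μ : Cardinal.{v})
    (hκ : κ.IsRegular) (hlam : lam.IsRegular) (hμ : μ.IsRegular)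
    (hacc : IsCardAccessible C κ) (hsharp : SharplyLess κ lam)
    (A B : C) (hA : IsCardPresentable κ A) (hB : IsCardPresentable lam B)
    (hhom : ∀ A' : C, IsCardPresentable κ A' → Cardinal.mk (A ⟶ A') < μ) :
    Cardinal.mk (A ⟶ B) < max lam μ := by
  have : Fact κ.IsRegular := ⟨hκ⟩
  have : Fact lam.IsRegular := ⟨hlam⟩
  obtain ⟨hco, P, -, hP, hdec⟩ := hacc
  obtain ⟨J, _, F, c, hJ, hFP, ⟨hc⟩, ⟨e⟩⟩ := hdec B
  have := isCardFiltered_iff_isCardinalFiltered.1 hJ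
  obtain ⟨α, _, _, Φ, _⟩ := IsCardinalFiltered.exists_cardinal_directed J κ
  have hcB : IsColimit ((c.extend e.hom).whisker Φ) :=
    (Functor.Final.isColimitWhiskerEquiv Φ _).symm (hc.extendIso e.hom)
  obtain ⟨S, hS, hScard, c', ⟨hc'⟩, ⟨r⟩⟩ := hsharp.exists_retract_colimit_restrictToSet
    (fun J _ hJ => hco J (isCardFiltered_iff_isCardinalFiltered.2 hJ)) hcB hB
  have := hA.preservesColimitsOfShape S
  have hmax : (max lam μ).IsRegular := by
    rcases max_choice lam μ with h | h <;> rw [h] <;> assumption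
  calc Cardinal.mk (A ⟶ B) ≤ Cardinal.mk (A ⟶ c'.pt) := r.mk_hom_le A
    _ ≤ Cardinal.sum fun a => Cardinal.mk (A ⟶ (restrictToSet (Φ ⋙ F) S).obj a) :=
      mk_hom_le_sum_of_isColimit hc' A
    _ < max lam μ := Cardinal.sum_lt_of_isRegular hmax
      (lt_max_of_lt_left ((hasCardinalLT_iff_cardinal_mk_lt _ _).1 hScard))
      fun a => lt_max_of_lt_right (hhom _ (hP _ (hFP _)))
end
end

section
/- Let C be a locally small category, D a κ-small category, and λ ≥ κ a regular cardinal such that C has colimits of small λ-filtered diagrams. If A : D → C is a diagram all of whose vertices are λ-presentable objects of C, then A is a λ-presentable object of the functor category Fun(D, C). -/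
/-!
Colimits in `D ⥤ C` are computed pointwise, so each component of a map `A ⟶ colim F` factors
through some stage of the `lam`-filtered diagram, and since `D` has fewer than `lam` objects, all
of them factor through a common stage. The resulting family need not be natural, but each of the
fewer than `lam` naturality squares commutes after passing to a later stage, and
`lam`-filteredness provides one stage where they all commute. Injectivity of
`colim Hom(A, F) → Hom(A, colim F)` is the same argument applied to one equation per object.
-/

universe v u u₂

open CategoryTheory Limits Opposite

noncomputable section

section Cardinality

variable {K : Type v} [SmallCategory K] {κ lam : Cardinal.{v}}

lemma CardSmallCat.mono (h : CardSmallCat K κ) (hκ : κ ≤ lam) : CardSmallCat K lam :=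
  h.trans_le hκ

lemma CardSmallCat.mk_lt (h : CardSmallCat K κ) : Cardinal.mk K < κ :=
  (Cardinal.mk_le_of_injective (f := fun k => (⟨(k, k), 𝟙 k⟩ : Σ p : K × K, p.1 ⟶ p.2))
    fun _ _ h => congrArg (·.1.1) h).trans_lt h

lemma cardSmallCat_of_isThin [Quiver.IsThin K] (hκ : κ.IsRegular) (hK : Cardinal.mk K < κ) :
    CardSmallCat K κ := by
  have : Cardinal.mk (Σ p : K × K, p.1 ⟶ p.2) ≤ Cardinal.mk (K × K) :=
    Cardinal.mk_le_of_injective (f := Sigma.fst) fun ⟨p, f⟩ ⟨q, g⟩ h => by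
      cases h; rw [Subsingleton.elim f g]
  refine this.trans_lt ?_
  rw [Cardinal.mk_prod, Cardinal.lift_id]
  exact Cardinal.mul_lt_of_lt hκ.aleph0_le hK hK

lemma cardSmallCat_discrete {T : Type v} (hκ : κ.IsRegular) (hT : Cardinal.mk T < κ) :
    CardSmallCat (Discrete T) κ :=
  cardSmallCat_of_isThin hκ (by rwa [Cardinal.mk_congr discreteEquiv])

lemma cardSmallCat_widePushoutShape {T : Type v} (hκ : κ.IsRegular) (hT : Cardinal.mk T < κ) :
    CardSmallCat (WidePushoutShape T) κ :=
  cardSmallCat_of_isThin hκ <| Cardinal.mk_option.trans_lt <|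
    Cardinal.add_lt_of_lt hκ.aleph0_le hT (Cardinal.one_lt_aleph0.trans_le hκ.aleph0_le)

end Cardinality

namespace IsCardFiltered

variable {J : Type v} [SmallCategory J] {lam : Cardinal.{v}}

lemma isFiltered (hlam : lam.IsRegular) (hJ : IsCardFiltered J lam) : IsFiltered J := by
  refine IsFiltered.of_cocone_nonempty.{v} _ fun {K} _ _ F => ?_
  refine hJ K ?_ F
  have : Finite (Σ p : K × K, p.1 ⟶ p.2) := by
    have : Fintype K := FinCategory.fintypeObj
    have (p : K × K) : Fintype (p.1 ⟶ p.2) := FinCategory.fintypeHom p.1 p.2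
    infer_instance
  exact (Cardinal.mk_lt_aleph0_iff.mpr this).trans_le hlam.aleph0_le

lemma exists_forall_nonempty_hom (hlam : lam.IsRegular) (hJ : IsCardFiltered J lam) {T : Type v}
    (hT : Cardinal.mk T < lam) (j : T → J) : ∃ k, ∀ t, Nonempty (j t ⟶ k) := by
  obtain ⟨s⟩ := hJ _ (cardSmallCat_discrete hlam hT) (Discrete.functor j)
  exact ⟨s.pt, fun t => ⟨s.ι.app ⟨t⟩⟩⟩

lemma exists_hom_forall (hlam : lam.IsRegular) (hJ : IsCardFiltered J lam) {T : Type v}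
    (hT : Cardinal.mk T < lam) {m : J} (P : T → ∀ k : J, (m ⟶ k) → Prop)
    (hP : ∀ t k k' (w : m ⟶ k) (g : k ⟶ k'), P t k w → P t k' (w ≫ g))
    (h : ∀ t, ∃ k w, P t k w) : ∃ k w, ∀ t, P t k w := by
  choose k w hw using h
  obtain ⟨s⟩ := hJ _ (cardSmallCat_widePushoutShape hlam hT) (WidePushoutShape.wideSpan m k w)
  refine ⟨s.pt, s.ι.app none, fun t => ?_⟩
  have hs : w t ≫ s.ι.app (some t) = s.ι.app none := s.w (WidePushoutShape.Hom.init t)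
  exact hs ▸ hP _ _ _ _ _ (hw t)

end IsCardFiltered

namespace IsCardPresentable

variable {C : Type u} [Category.{v} C] {lam : Cardinal.{v}} {X : C} {J : Type v}
  [SmallCategory J] {F : J ⥤ C} {c : Cocone F}

lemma exists_comp_eq (hX : IsCardPresentable lam X) (hJ : IsCardFiltered J lam)
    (hc : IsColimit c) (f : X ⟶ c.pt) : ∃ (j : J) (g : X ⟶ F.obj j), g ≫ c.ι.app j = f := by
  have := (hX J hJ).some
  exact Types.jointly_surjective _ (isColimitOfPreserves (coyoneda.obj (op X)) hc) f

lemma exists_comp_map_eq (hX : IsCardPresentable lam X) (hlam : lam.IsRegular)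
    (hJ : IsCardFiltered J lam) (hc : IsColimit c) {m : J} (a b : X ⟶ F.obj m)
    (h : a ≫ c.ι.app m = b ≫ c.ι.app m) : ∃ (k : J) (w : m ⟶ k), a ≫ F.map w = b ≫ F.map w := by
  have := (hX J hJ).some
  have := hJ.isFiltered hlam
  exact (Types.FilteredColimit.isColimit_eq_iff'
    (isColimitOfPreserves (coyoneda.obj (op X)) hc) a b).mp h

end IsCardPresentable

section PointwiseColimit

variable {C : Type u} [Category.{v} C] {lam : Cardinal.{v}} {D : Type v} [SmallCategory D]
  {A : D ⥤ C} {J : Type v} [SmallCategory J] {F : J ⥤ D ⥤ C} {c : Cocone F}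

lemma exists_comp_map_eq_of_isColimit_evaluation (hlam : lam.IsRegular)
    (hD : Cardinal.mk D < lam) (hA : ∀ d, IsCardPresentable lam (A.obj d))
    (hJ : IsCardFiltered J lam) (hc : ∀ d, IsColimit (((evaluation D C).obj d).mapCocone c))
    {m : J} (x y : A ⟶ F.obj m) (h : x ≫ c.ι.app m = y ≫ c.ι.app m) :
    ∃ (k : J) (w : m ⟶ k), x ≫ F.map w = y ≫ F.map w := by
  obtain ⟨k, w, hw⟩ := hJ.exists_hom_forall hlam hD
    (fun d _ w => x.app d ≫ (F.map w).app d = y.app d ≫ (F.map w).app d)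
    (fun d _ _ w g hw => by simp only [Functor.map_comp, NatTrans.comp_app, ← Category.assoc, hw])
    (fun d => (hA d).exists_comp_map_eq hlam hJ (hc d) (x.app d) (y.app d) (congr_app h d))
  exact ⟨k, w, by ext d; exact hw d⟩

lemma exists_app_comp_eq_of_isColimit_evaluation (hlam : lam.IsRegular)
    (hD : Cardinal.mk D < lam) (hA : ∀ d, IsCardPresentable lam (A.obj d))
    (hJ : IsCardFiltered J lam) (hc : ∀ d, IsColimit (((evaluation D C).obj d).mapCocone c))
    (η : A ⟶ c.pt) :
    ∃ (j : J) (g : ∀ d, A.obj d ⟶ (F.obj j).obj d), ∀ d, g d ≫ (c.ι.app j).app d = η.app d := by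
  choose j g hg using fun d => (hA d).exists_comp_eq hJ (hc d) (η.app d)
  obtain ⟨k, hk⟩ := hJ.exists_forall_nonempty_hom hlam hD j
  refine ⟨k, fun d => g d ≫ (F.map (hk d).some).app d, fun d => ?_⟩
  rw [Category.assoc, ← NatTrans.comp_app, c.w, ← hg d]
  rfl

lemma exists_comp_eq_of_isColimit_evaluation (hlam : lam.IsRegular)
    (hD : CardSmallCat D lam) (hA : ∀ d, IsCardPresentable lam (A.obj d))
    (hJ : IsCardFiltered J lam) (hc : ∀ d, IsColimit (((evaluation D C).obj d).mapCocone c))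
    (η : A ⟶ c.pt) : ∃ (k : J) (ζ : A ⟶ F.obj k), ζ ≫ c.ι.app k = η := by
  obtain ⟨j, g, hg⟩ := exists_app_comp_eq_of_isColimit_evaluation hlam hD.mk_lt hA hJ hc η
  obtain ⟨k, w, hw⟩ := hJ.exists_hom_forall hlam hD
    (fun f _ w => (A.map f.2 ≫ g f.1.2) ≫ (F.map w).app f.1.2 =
      (g f.1.1 ≫ (F.obj j).map f.2) ≫ (F.map w).app f.1.2)
    (fun f _ _ w v hw => by simp only [Functor.map_comp, NatTrans.comp_app, ← Category.assoc, hw])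
    (fun ⟨(d, d'), f⟩ => (hA d).exists_comp_map_eq hlam hJ (hc d') _ _ (by
      simp only [Functor.mapCocone_ι_app, evaluation_obj_map, Category.assoc, hg,
        NatTrans.naturality, reassoc_of% (hg d)]))
  refine ⟨k, { app d := g d ≫ (F.map w).app d, naturality d d' f := ?_ }, ?_⟩
  · simpa [← NatTrans.naturality] using hw ⟨(d, d'), f⟩
  · ext d
    rw [NatTrans.comp_app, Category.assoc, ← NatTrans.comp_app, c.w, hg]

def isColimitCoyonedaMapCoconeOfIsColimitEvaluation (hlam : lam.IsRegular)
    (hD : CardSmallCat D lam) (hA : ∀ d, IsCardPresentable lam (A.obj d))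
    (hJ : IsCardFiltered J lam) (hc : ∀ d, IsColimit (((evaluation D C).obj d).mapCocone c)) :
    IsColimit ((coyoneda.obj (op A)).mapCocone c) :=
  have := hJ.isFiltered hlam
  Types.FilteredColimit.isColimitOf' _ _
    (fun η => by
      obtain ⟨k, ζ, hζ⟩ := exists_comp_eq_of_isColimit_evaluation hlam hD hA hJ hc η
      exact ⟨k, ζ, hζ.symm⟩)
    (fun _ x y h => exists_comp_map_eq_of_isColimit_evaluation hlam hD.mk_lt hA hJ hc x y h)

end PointwiseColimit

theorem stmt7_general {C : Type u} [Category.{v} C] (κ lam : Cardinal.{v})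
    (hlam : lam.IsRegular) (hkl : κ ≤ lam)
    {D : Type v} [SmallCategory D] (hD : CardSmallCat D κ)
    (hcolim : ∀ (J : Type v) [SmallCategory J], IsCardFiltered J lam → HasColimitsOfShape J C)
    (A : D ⥤ C) (hA : ∀ d, IsCardPresentable lam (A.obj d)) :
    IsCardPresentable lam A := by
  intro J _ hJ
  have := hcolim J hJ
  refine ⟨⟨fun {F} => preservesColimit_of_preserves_colimit_cocone (colimit.isColimit F) ?_⟩⟩
  exact isColimitCoyonedaMapCoconeOfIsColimitEvaluation hlam (hD.mono hkl) hA hJ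
    fun d => isColimitOfPreserves ((evaluation D C).obj d) (colimit.isColimit F)

/-- A diagram of `lam`-presentable objects indexed by a `κ`-small category is a
`lam`-presentable object of the functor category. -/
theorem stmt7 {C : Type u} [Category.{v} C] (κ lam : Cardinal.{v})
    (hκ : κ.IsRegular) (hlam : lam.IsRegular) (hkl : κ ≤ lam)
    {D : Type v} [SmallCategory D] (hD : CardSmallCat D κ)
    (hcolim : ∀ (J : Type v) [SmallCategory J], IsCardFiltered J lam → HasColimitsOfShape J C)
    (A : D ⥤ C) (hA : ∀ d, IsCardPresentable lam (A.obj d)) :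
    IsCardPresentable lam A :=
  stmt7_general κ lam hlam hkl hD hcolim A hA
end
end

section
/- Let F : C → D be a strongly κ-accessible functor and let D' be the full subcategory of D spanned by the image of F. Then: (a) every object of D' is a colimit in D of a small κ-filtered diagram of objects of D' that are κ-presentable in D; (b) every κ-presentable object of D' is κ-presentable in D; (c) if D' is closed under small κ-filtered colimits in D, then D' is a κ-accessible category and its inclusion into D is κ-accessible. -/
universe v u u₂

open CategoryTheory Limits Opposite

noncomputable section

/-!
Every object of the image is `F X` for some `X`, and `X` is a κ-filtered colimit of
κ-presentable objects `Aⱼ`; since `F` preserves that colimit, `F X` is the colimit of the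
`F Aⱼ`, both in `D` and in the image. This gives (a) and the generators for (c). For (b), an
object that is κ-presentable in the image is a retract of one of the `F Aⱼ`, and retracts of
κ-presentable objects are κ-presentable. For (c), closure under κ-filtered colimits makes the
inclusion create them, and a fully faithful functor preserving κ-filtered colimits reflects
κ-presentability.
-/

namespace CategoryTheory

section Retract

variable {C D : Type*} [Category C] [Category D]

def Retract.isColimitMapCocone {F G : C ⥤ D} (r : Retract G F) {J : Type*} [Category J]
    {K : J ⥤ C} {c : Cocone K} (hc : IsColimit (F.mapCocone c)) :
    IsColimit (G.mapCocone c) :=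
  have hri (X : C) : r.i.app X ≫ r.r.app X = 𝟙 _ := by
    rw [← NatTrans.comp_app, r.retract, NatTrans.id_app]
  let coconeF (s : Cocone (K ⋙ G)) : Cocone (K ⋙ F) :=
    ⟨s.pt, { app := fun j => r.r.app (K.obj j) ≫ s.ι.app j
             naturality := fun i j f => by
               dsimp
               rw [r.r.naturality_assoc, Category.comp_id]
               exact congrArg _ (s.w f) }⟩
  { desc := fun s => r.i.app c.pt ≫ hc.desc (coconeF s)
    fac := fun s j => by
      have := hc.fac (coconeF s) j
      dsimp [coconeF] at this ⊢
      rw [r.i.naturality_assoc, this, reassoc_of% hri]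
    uniq := fun s m hm => by
      have := hc.uniq (coconeF s) (r.r.app c.pt ≫ m) fun j => by
        dsimp [coconeF] at hm ⊢
        rw [r.r.naturality_assoc, hm]
      dsimp at this ⊢
      rw [← this, reassoc_of% hri] }

lemma Retract.preservesColimitsOfShape {F G : C ⥤ D} (r : Retract G F) (J : Type*)
    [Category J] [PreservesColimitsOfShape J F] : PreservesColimitsOfShape J G :=
  ⟨⟨fun hc => ⟨r.isColimitMapCocone (isColimitOfPreserves F hc)⟩⟩⟩

end Retract

def Functor.FullyFaithful.coyonedaObjIso {C : Type u} [Category.{v} C] {D : Type u₂}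
    [Category.{v} D] {G : C ⥤ D} (hG : G.FullyFaithful) (X : C) :
    coyoneda.obj (op X) ≅ G ⋙ coyoneda.obj (op (G.obj X)) :=
  NatIso.ofComponents (fun _ => hG.homEquiv.toIso) fun _ => by ext; simp

def IsCardFilteredColimitOf {C : Type u} [Category.{v} C] (κ : Cardinal.{v}) (S : Set C)
    (X : C) : Prop :=
  ∃ (J : Type v) (_ : SmallCategory J) (K : J ⥤ C) (c : Cocone K),
    IsCardFiltered J κ ∧ (∀ j, K.obj j ∈ S) ∧ Nonempty (IsColimit c) ∧ Nonempty (c.pt ≅ X)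

variable {C : Type u} [Category.{v} C] {D : Type u₂} [Category.{v} D] {κ : Cardinal.{v}}

namespace IsCardFilteredColimitOf

variable {S T : Set C} {X : C}

lemma mono (h : IsCardFilteredColimitOf κ S X) (hST : S ⊆ T) :
    IsCardFilteredColimitOf κ T X := by
  obtain ⟨J, _, K, c, hJ, hK, hc, e⟩ := h
  exact ⟨J, _, K, c, hJ, fun j => hST (hK j), hc, e⟩

lemma map (h : IsCardFilteredColimitOf κ S X) (G : C ⥤ D) (hG : PreservesCardFiltered G κ) :
    IsCardFilteredColimitOf κ (G.obj '' S) (G.obj X) := by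
  obtain ⟨J, _, K, c, hJ, hK, ⟨hc⟩, ⟨e⟩⟩ := h
  have := (hG J hJ).some
  exact ⟨J, _, K ⋙ G, G.mapCocone c, hJ, fun j => ⟨K.obj j, hK j, rfl⟩,
    ⟨isColimitOfPreserves G hc⟩, ⟨G.mapIso e⟩⟩

end IsCardFilteredColimitOf

namespace IsCardPresentable

lemma of_retract {A B : C} (h : Retract A B) (hB : IsCardPresentable κ B) :
    IsCardPresentable κ A := fun J _ hJ =>
  have := (hB J hJ).some
  ⟨(h.op.map coyoneda).preservesColimitsOfShape J⟩

lemma exists_retract {S : Set C} {Y : C} (hY : IsCardPresentable κ Y)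
    (h : IsCardFilteredColimitOf κ S Y) : ∃ A ∈ S, Nonempty (Retract Y A) := by
  obtain ⟨J, _, K, c, hJ, hK, ⟨hc⟩, ⟨e⟩⟩ := h
  have := (hY J hJ).some
  obtain ⟨j, g, hg⟩ :=
    Types.jointly_surjective _ (isColimitOfPreserves (coyoneda.obj (op Y)) hc) e.inv
  have hg : g ≫ c.ι.app j = e.inv := hg
  exact ⟨K.obj j, hK j, ⟨⟨g, c.ι.app j ≫ e.hom, by simp [reassoc_of% hg]⟩⟩⟩

lemma of_fullyFaithful {G : C ⥤ D} (hG : G.FullyFaithful) (hGpres : PreservesCardFiltered G κ)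
    {X : C} (hX : IsCardPresentable κ (G.obj X)) : IsCardPresentable κ X := fun J _ hJ =>
  have := (hGpres J hJ).some
  have := (hX J hJ).some
  ⟨preservesColimitsOfShape_of_natIso (hG.coyonedaObjIso X).symm⟩

end IsCardPresentable

namespace ObjectProperty

variable (P : ObjectProperty D)

lemma preservesCardFiltered_lift (G : C ⥤ D) (hG : ∀ X, P (G.obj X))
    (hGpres : PreservesCardFiltered G κ) : PreservesCardFiltered (P.lift G hG) κ :=
  fun J _ hJ =>
  have := (hGpres J hJ).some
  have := preservesColimitsOfShape_of_natIso (J := J) (P.liftCompιIso G hG).symm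
  ⟨preservesColimitsOfShape_of_reflects_of_preserves (P.lift G hG) P.ι⟩

lemma isClosedUnderColimitsOfShape_of_isColimit {J : Type v} [SmallCategory J]
    (hP : ∀ (K : J ⥤ D), (∀ j, P (K.obj j)) → ∀ (c : Cocone K), Nonempty (IsColimit c) → P c.pt) :
    P.IsClosedUnderColimitsOfShape J :=
  ⟨fun _ ⟨p⟩ => hP p.diag p.prop_diag_obj _ ⟨p.isColimit⟩⟩

variable {P} in
lemma isCardAccessible_fullSubcategory
    (hD : ∀ (J : Type v) [SmallCategory J], IsCardFiltered J κ → HasColimitsOfShape J D)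
    (hP : ∀ (J : Type v) [SmallCategory J], IsCardFiltered J κ → ∀ (K : J ⥤ D),
      (∀ j, P (K.obj j)) → ∀ (c : Cocone K), Nonempty (IsColimit c) → P c.pt)
    (S : Set P.FullSubcategory) [Small.{v} S] (hS : ∀ A ∈ S, IsCardPresentable κ A.obj)
    (hSgen : ∀ Y, IsCardFilteredColimitOf κ S Y) :
    IsCardAccessible P.FullSubcategory κ ∧ PreservesCardFiltered P.ι κ := by
  have hι : PreservesCardFiltered P.ι κ := fun J _ hJ =>
    have := hD J hJ
    have := P.isClosedUnderColimitsOfShape_of_isColimit (hP J hJ)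
    ⟨inferInstance⟩
  refine ⟨⟨fun J _ hJ => ?_, S, ‹_›, fun A hA => ?_, hSgen⟩, hι⟩
  · have := hD J hJ
    have := P.isClosedUnderColimitsOfShape_of_isColimit (hP J hJ)
    infer_instance
  · exact (hS A hA).of_fullyFaithful P.fullyFaithfulι hι

end ObjectProperty

end CategoryTheory

theorem stmt9_general {C : Type u} {D : Type u₂} [Category.{v} C] [Category.{v} D]
    (κ : Cardinal.{v}) (F : C ⥤ D)
    (hF : StronglyCardAccessible F κ) :
    (∀ Y : D, (∃ X : C, F.obj X = Y) →
       ∃ (J : Type v) (inst : SmallCategory J) (G : J ⥤ D) (c : Cocone G),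
         IsCardFiltered J κ ∧
         (∀ j, (∃ X, F.obj X = G.obj j) ∧ IsCardPresentable κ (G.obj j)) ∧
         Nonempty (IsColimit c) ∧ Nonempty (c.pt ≅ Y)) ∧
    (∀ Y : ObjectProperty.FullSubcategory (fun d => ∃ X, F.obj X = d),
       IsCardPresentable κ Y → IsCardPresentable κ Y.obj) ∧
    ((∀ (J : Type v) [SmallCategory J], IsCardFiltered J κ →
        ∀ (G : J ⥤ D), (∀ j, ∃ X, F.obj X = G.obj j) →
          ∀ (c : Cocone G), Nonempty (IsColimit c) → ∃ X, F.obj X = c.pt) →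
      IsCardAccessible (ObjectProperty.FullSubcategory (fun d => ∃ X, F.obj X = d)) κ ∧
        PreservesCardFiltered (ObjectProperty.ι (fun d => ∃ X, F.obj X = d)) κ) := by
  obtain ⟨⟨-, S, hS, hSpres, hSgen⟩, ⟨hDcolim, -⟩, hFpres, hFpresObj⟩ := hF
  set P : ObjectProperty D := fun d => ∃ X, F.obj X = d
  have hP : ∀ X, P (F.obj X) := fun X => ⟨X, rfl⟩
  have hFS : ∀ A ∈ S, IsCardPresentable κ (F.obj A) := fun A hA => hFpresObj A (hSpres A hA)
  set L := P.lift F hP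
  have hLgen : ∀ Y : P.FullSubcategory, IsCardFilteredColimitOf κ (L.obj '' S) Y := by
    rintro ⟨_, X, rfl⟩
    exact IsCardFilteredColimitOf.map (hSgen X) L (P.preservesCardFiltered_lift F hP hFpres)
  refine ⟨?_, ?_, fun hclosed => ?_⟩
  · rintro _ ⟨X, rfl⟩
    refine (IsCardFilteredColimitOf.map (hSgen X) F hFpres).mono
      (T := {d | (∃ X, F.obj X = d) ∧ IsCardPresentable κ d}) ?_
    rintro _ ⟨A, hA, rfl⟩
    exact ⟨⟨A, rfl⟩, hFS A hA⟩
  · intro Y hY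
    obtain ⟨_, ⟨A, hA, rfl⟩, ⟨r⟩⟩ := hY.exists_retract (hLgen Y)
    exact (hFS A hA).of_retract (r.map P.ι)
  · have := hS
    exact P.isCardAccessible_fullSubcategory hDcolim hclosed (L.obj '' S)
      (by rintro _ ⟨A, hA, rfl⟩; exact hFS A hA) hLgen

/-- The full image of a strongly `κ`-accessible functor. -/
theorem stmt9 {C : Type u} {D : Type u₂} [Category.{v} C] [Category.{v} D]
    (κ : Cardinal.{v}) (hκ : κ.IsRegular) (F : C ⥤ D)
    (hF : StronglyCardAccessible F κ) :
    (∀ Y : D, (∃ X : C, F.obj X = Y) →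
       ∃ (J : Type v) (inst : SmallCategory J) (G : J ⥤ D) (c : Cocone G),
         IsCardFiltered J κ ∧
         (∀ j, (∃ X, F.obj X = G.obj j) ∧ IsCardPresentable κ (G.obj j)) ∧
         Nonempty (IsColimit c) ∧ Nonempty (c.pt ≅ Y)) ∧
    (∀ Y : ObjectProperty.FullSubcategory (fun d => ∃ X, F.obj X = d),
       IsCardPresentable κ Y → IsCardPresentable κ Y.obj) ∧
    ((∀ (J : Type v) [SmallCategory J], IsCardFiltered J κ →
        ∀ (G : J ⥤ D), (∀ j, ∃ X, F.obj X = G.obj j) →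
          ∀ (c : Cocone G), Nonempty (IsColimit c) → ∃ X, F.obj X = c.pt) →
      IsCardAccessible (ObjectProperty.FullSubcategory (fun d => ∃ X, F.obj X = d)) κ ∧
        PreservesCardFiltered (ObjectProperty.ι (fun d => ∃ X, F.obj X = d)) κ) :=
  stmt9_general κ F hF
end
end

section
/- If J is a κ-small κ-filtered category, then there exists an object j of J together with an idempotent endomorphism e : j → j such that the subcategory of J generated by e is cofinal in J. Consequently, in an idempotent-complete category every κ-small κ-filtered diagram has a colimit, and every object is (κ,κ)-presentable. -/
universe v u u₂

open CategoryTheory Limits Opposite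

noncomputable section

/-- The one-object subcategory of `J` generated by a submonoid `S` of endomorphisms of `j`,
together with its inclusion into `J`. -/
def idemFunctor {J : Type v} [SmallCategory J] {j : J} (S : Submonoid (CategoryTheory.End j)) :
    CategoryTheory.SingleObj S ⥤ J where
  obj _ := j
  map f := Subtype.val (α := CategoryTheory.End j) f
  map_id _ := rfl
  map_comp _ _ := rfl


/-!
Since `J` is `κ`-small and `κ`-filtered, the identity functor of `J` has a cocone `c`. Its leg
`e := c.ι.app c.pt` at the vertex satisfies `f ≫ e = c.ι.app i` for every `f : i ⟶ c.pt`; so `e` is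
idempotent, and any two arrows `i ⟶ c.pt` agree after composing with `e`, which makes the
subcategory `{1, e}` cofinal. For a diagram `G : J ⥤ C`, any splitting
`G.map e = r ≫ i` with `i ≫ r = 𝟙` is a colimit of `G` with legs `G.map (c.ι.app k) ≫ r`. Splittings
are preserved by every functor, so this colimit is absolute; in particular `Hom(X, -)` preserves it.
-/

namespace CategoryTheory.Limits.Cocone

universe v₁ v₂ v₃ u₁ u₃

section

variable {J : Type u₁} [Category.{v₁} J]

lemma comp_ι_app_pt (c : Cocone (𝟭 J)) {i : J} (f : i ⟶ c.pt) :
    f ≫ c.ι.app c.pt = c.ι.app i := by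
  simpa using c.w f

lemma ι_app_pt_idem (c : Cocone (𝟭 J)) : c.ι.app c.pt ≫ c.ι.app c.pt = c.ι.app c.pt :=
  c.comp_ι_app_pt _

variable {C : Type u₂} [Category.{v₂} C] {Y : C}

def splittingCocone (c : Cocone (𝟭 J)) (G : J ⥤ C) (r : G.obj c.pt ⟶ Y) : Cocone G where
  pt := Y
  ι :=
    { app := fun k => G.map (c.ι.app k) ≫ r
      naturality := fun k k' f => by
        simp [← G.map_comp_assoc, show f ≫ c.ι.app k' = c.ι.app k by simpa using c.w f] }

def isColimitSplittingCocone (c : Cocone (𝟭 J)) (G : J ⥤ C) (i : Y ⟶ G.obj c.pt)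
    (r : G.obj c.pt ⟶ Y) (hir : i ≫ r = 𝟙 Y) (hri : r ≫ i = G.map (c.ι.app c.pt)) :
    IsColimit (c.splittingCocone G r) where
  desc d := i ≫ d.ι.app c.pt
  fac d k := by
    show (G.map (c.ι.app k) ≫ r) ≫ i ≫ d.ι.app c.pt = d.ι.app k
    have absorb : G.map (c.ι.app c.pt) ≫ d.ι.app c.pt = d.ι.app c.pt := d.w _
    rw [Category.assoc, reassoc_of% hri, absorb]
    exact d.w _
  uniq d m hm := by
    show m = i ≫ d.ι.app c.pt
    rw [← hm c.pt]
    show m = i ≫ (G.map (c.ι.app c.pt) ≫ r) ≫ m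
    rw [← hri, Category.assoc, hir, Category.comp_id]
    have retract (n : Y ⟶ d.pt) : n = i ≫ r ≫ n := by rw [reassoc_of% hir]
    exact retract m

def mapSplittingCoconeIso {D : Type u₃} [Category.{v₃} D] (c : Cocone (𝟭 J)) (G : J ⥤ C)
    (H : C ⥤ D) (r : G.obj c.pt ⟶ Y) :
    H.mapCocone (c.splittingCocone G r) ≅ c.splittingCocone (G ⋙ H) (H.map r) :=
  Cocone.ext (Iso.refl _) (fun k => by simp [splittingCocone])

lemma hasColimit_of_isIdempotentComplete [IsIdempotentComplete C] (c : Cocone (𝟭 J))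
    (G : J ⥤ C) : HasColimit G := by
  obtain ⟨Y, i, r, hir, hri⟩ := IsIdempotentComplete.idempotents_split (G.obj c.pt)
    (G.map (c.ι.app c.pt)) (by rw [← G.map_comp, c.ι_app_pt_idem])
  exact ⟨⟨⟨_, c.isColimitSplittingCocone G i r hir hri⟩⟩⟩

lemma preservesColimit_of_isIdempotentComplete [IsIdempotentComplete C] {D : Type u₃}
    [Category.{v₃} D] (c : Cocone (𝟭 J)) (G : J ⥤ C) (H : C ⥤ D) : PreservesColimit G H := by
  obtain ⟨Y, i, r, hir, hri⟩ := IsIdempotentComplete.idempotents_split (G.obj c.pt)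
    (G.map (c.ι.app c.pt)) (by rw [← G.map_comp, c.ι_app_pt_idem])
  have hmap : IsColimit (c.splittingCocone (G ⋙ H) (H.map r)) :=
    c.isColimitSplittingCocone (G ⋙ H) (H.map i) (H.map r)
      (by rw [← H.map_comp, hir, H.map_id]) (by rw [← H.map_comp, hri]; rfl)
  exact preservesColimit_of_preserves_colimit_cocone (c.isColimitSplittingCocone G i r hir hri)
    (hmap.ofIsoColimit (c.mapSplittingCoconeIso G H r).symm)

end

lemma final_idemFunctor {J : Type u₁} [SmallCategory J] (c : Cocone (𝟭 J)) :
    (idemFunctor (Submonoid.closure ({c.ι.app c.pt} : Set (End c.pt)))).Final := by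
  set S := Submonoid.closure ({c.ι.app c.pt} : Set (End c.pt))
  refine ⟨fun i => ?_⟩
  let z : StructuredArrow i (idemFunctor S) :=
    StructuredArrow.mk (Y := SingleObj.star S) (c.ι.app i)
  have toZ (x : StructuredArrow i (idemFunctor S)) : x ⟶ z :=
    StructuredArrow.homMk (show x.right ⟶ SingleObj.star S from
      ⟨c.ι.app c.pt, Submonoid.subset_closure rfl⟩) (c.comp_ι_app_pt x.hom)
  have : Nonempty (StructuredArrow i (idemFunctor S)) := ⟨z⟩
  exact zigzag_isConnected fun x y =>
    (Zigzag.of_hom (toZ x)).trans (Zigzag.of_inv (toZ y))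

end CategoryTheory.Limits.Cocone

theorem stmt13_general (κ : Cardinal.{v}) :
    (∀ (J : Type v) [SmallCategory J], CardSmallCat J κ → IsCardFiltered J κ →
      ∃ (j : J) (e : j ⟶ j), e ≫ e = e ∧
        (idemFunctor (Submonoid.closure {(e : CategoryTheory.End j)})).Final) ∧
    ∀ (C : Type u) [Category.{v} C], IsIdempotentComplete C →
      (∀ (J : Type v) [SmallCategory J], CardSmallCat J κ → IsCardFiltered J κ →
        ∀ F : J ⥤ C, HasColimit F) ∧
      ∀ X : C, IsRelPresentable κ κ X := by
  refine ⟨fun J _ hsmall hfilt => ?_, fun C _ _ => ⟨fun J _ hsmall hfilt F => ?_, ?_⟩⟩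
  · obtain ⟨c⟩ := hfilt J hsmall (𝟭 J)
    exact ⟨c.pt, c.ι.app c.pt, c.ι_app_pt_idem, c.final_idemFunctor⟩
  · obtain ⟨c⟩ := hfilt J hsmall (𝟭 J)
    exact c.hasColimit_of_isIdempotentComplete F
  · intro X J _ hsmall hfilt
    obtain ⟨c⟩ := hfilt J hsmall (𝟭 J)
    exact ⟨⟨fun {F} => c.preservesColimit_of_isIdempotentComplete F _⟩⟩

/-- Every `κ`-small `κ`-filtered category has a cofinal subcategory generated by a single
idempotent; consequently, in an idempotent-complete category every `κ`-small `κ`-filtered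
diagram has a colimit and every object is `(κ,κ)`-presentable. -/
theorem stmt13 (κ : Cardinal.{v}) (hκ : κ.IsRegular) :
    (∀ (J : Type v) [SmallCategory J], CardSmallCat J κ → IsCardFiltered J κ →
      ∃ (j : J) (e : j ⟶ j), e ≫ e = e ∧
        (idemFunctor (Submonoid.closure {(e : CategoryTheory.End j)})).Final) ∧
    ∀ (C : Type u) [Category.{v} C], IsIdempotentComplete C →
      (∀ (J : Type v) [SmallCategory J], CardSmallCat J κ → IsCardFiltered J κ →
        ∀ F : J ⥤ C, HasColimit F) ∧
      ∀ X : C, IsRelPresentable κ κ X :=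
  stmt13_general κ
end
end

section
/- An essentially small category is (κ,κ)-accessibly generated if and only if it is idempotent-complete. -/
universe v u u₂

open CategoryTheory Limits Opposite

noncomputable section

/-- `C` is a `(κ, lam)`-accessibly generated category. -/
def AccessiblyGenerated (C : Type u) [Category.{v} C] (κ lam : Cardinal.{v}) : Prop :=
  EssentiallySmall.{v} C ∧
  (∀ (J : Type v) [SmallCategory J], CardSmallCat J lam → IsCardFiltered J κ →
     ∀ F : J ⥤ C, HasColimit F) ∧
  ∀ X : C, ∃ (J : Type v) (inst : SmallCategory J) (F : J ⥤ C) (c : Cocone F),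
    CardSmallCat J lam ∧ IsCardFiltered J κ ∧ (∀ j, IsRelPresentable κ lam (F.obj j)) ∧
    Nonempty (IsColimit c) ∧ Nonempty (c.pt ≅ X)

/-!
A `κ`-small `κ`-filtered category `J` has a cocone `t` over its identity functor, and
`e = t.ι.app t.pt` is idempotent. A cocone `c` on `F : J ⥤ C` is a colimit exactly when
`c.ι.app t.pt` has a section `s` with `c.ι.app t.pt ≫ s = F.map e`, i.e. when it splits the
idempotent `F.map e`. Such splittings are preserved by every functor, so every object is
`(κ, κ)`-presentable, and these colimits exist as soon as idempotents split. Conversely, the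
one-object category of the monoid `{1, p}` is finite and has such a cocone, and the colimit of
its tautological diagram splits `p`.
-/

lemma cardSmallCat_of_finite (J : Type v) [SmallCategory J]
    [Finite (Σ p : J × J, p.1 ⟶ p.2)] {κ : Cardinal.{v}} (hκ : Cardinal.aleph0 ≤ κ) :
    CardSmallCat J κ :=
  (Cardinal.lt_aleph0_of_finite _).trans_le hκ

section CoconeId

variable {J : Type v} [SmallCategory J] {C : Type u} [Category.{v} C] {F : J ⥤ C}

lemma isCardFiltered_of_cocone_id (t : Cocone (𝟭 J)) (κ : Cardinal.{v}) : IsCardFiltered J κ :=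
  fun _ _ _ F => ⟨t.whisker F⟩

lemma map_ι_app_comp_ι_app_pt (t : Cocone (𝟭 J)) (c : Cocone F) (j : J) :
    F.map (t.ι.app j) ≫ c.ι.app t.pt = c.ι.app j :=
  c.w _

lemma map_ι_app_pt_comp_self (t : Cocone (𝟭 J)) :
    F.map (t.ι.app t.pt) ≫ F.map (t.ι.app t.pt) = F.map (t.ι.app t.pt) :=
  map_ι_app_comp_ι_app_pt t (F.mapCocone t) t.pt

def isColimitOfSection (t : Cocone (𝟭 J)) (c : Cocone F) (s : c.pt ⟶ F.obj t.pt)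
    (hs : s ≫ c.ι.app t.pt = 𝟙 c.pt) (hs' : c.ι.app t.pt ≫ s = F.map (t.ι.app t.pt)) :
    IsColimit c where
  desc d := s ≫ d.ι.app t.pt
  fac d j := by
    rw [← map_ι_app_comp_ι_app_pt t c j, Category.assoc, reassoc_of% hs',
      map_ι_app_comp_ι_app_pt t d, map_ι_app_comp_ι_app_pt t d]
  uniq d m hm := by
    rw [← hm, ← Category.assoc, hs, Category.id_comp]

lemma exists_section_of_isColimit (t : Cocone (𝟭 J)) {c : Cocone F} (hc : IsColimit c) :
    ∃ s : c.pt ⟶ F.obj t.pt,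
      s ≫ c.ι.app t.pt = 𝟙 c.pt ∧ c.ι.app t.pt ≫ s = F.map (t.ι.app t.pt) := by
  let d : Cocone F := F.mapCocone t
  refine ⟨hc.desc d, hc.hom_ext fun j => ?_, hc.fac d t.pt⟩
  rw [reassoc_of% (hc.fac d j), Category.comp_id]
  exact map_ι_app_comp_ι_app_pt t c j

lemma preservesColimitsOfShape_of_cocone_id (t : Cocone (𝟭 J)) {D : Type u₂} [Category.{v} D]
    (G : C ⥤ D) : PreservesColimitsOfShape J G where
  preservesColimit := ⟨fun hc => by
    obtain ⟨s, hs, hs'⟩ := exists_section_of_isColimit t hc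
    refine ⟨isColimitOfSection t (G.mapCocone _) (G.map s) ?_ ?_⟩
    · simp [← G.map_comp, hs]
    · simp [← G.map_comp, hs']⟩

lemma hasColimit_of_cocone_id (t : Cocone (𝟭 J)) [IsIdempotentComplete C] (F : J ⥤ C) :
    HasColimit F := by
  obtain ⟨Y, i, r, hir, hri⟩ :=
    IsIdempotentComplete.idempotents_split _ _ (map_ι_app_pt_comp_self (F := F) t)
  let c : Cocone F := (F.mapCocone t : Cocone F).extend r
  refine ⟨⟨⟨c, isColimitOfSection t c i ?_ ?_⟩⟩⟩
  · simp [c, ← hri, hir]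
  · simp [c, hri, map_ι_app_pt_comp_self]

end CoconeId

lemma IsIdempotentElem.finite_powers {M : Type*} [Monoid M] {a : M} (ha : IsIdempotentElem a) :
    Finite (Submonoid.powers a) :=
  Set.Finite.to_subtype (ha.coe_powers ▸ Set.toFinite _)

section IdempotentDiagram

variable {C : Type u} [Category.{v} C] {X : C}

-- `SingleObj M` lives in `Type`; `AsSmall` moves it to `Type v`.
abbrev IdempotentShape (p : X ⟶ X) : Type v :=
  AsSmall.{v} (SingleObj (Submonoid.powers (M := CategoryTheory.End X) p))

def idempotentDiagram (p : X ⟶ X) : IdempotentShape p ⥤ C :=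
  AsSmall.down ⋙ SingleObj.functor (Submonoid.powers _).subtype

def IdempotentShape.coconeId {p : X ⟶ X} (hp : p ≫ p = p) :
    Cocone (𝟭 (IdempotentShape p)) where
  pt := AsSmall.up.obj (SingleObj.star _)
  ι :=
    { app _ := ⟨⟨p, Submonoid.mem_powers (M := CategoryTheory.End X) p⟩⟩
      naturality := fun _ _ ⟨⟨m, n, hm⟩⟩ => ULift.ext _ _ <| Subtype.ext <| by
        subst hm
        exact ((pow_succ' (M := CategoryTheory.End X) p n).symm.trans
          (IsIdempotentElem.pow_succ_eq n hp)).trans (one_mul _).symm }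

lemma IdempotentShape.cardSmallCat {p : X ⟶ X} (hp : p ≫ p = p) {κ : Cardinal.{v}}
    (hκ : Cardinal.aleph0 ≤ κ) : CardSmallCat (IdempotentShape p) κ := by
  have := IsIdempotentElem.finite_powers (M := CategoryTheory.End X) hp
  have : Finite (IdempotentShape p) := inferInstanceAs (Finite (ULift Unit))
  have (a b : IdempotentShape p) : Finite (a ⟶ b) := inferInstanceAs (Finite (ULift _))
  exact cardSmallCat_of_finite _ hκ

end IdempotentDiagram

lemma isIdempotentComplete_of_hasColimit_idempotentDiagram {C : Type u} [Category.{v} C]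
    (h : ∀ (X : C) (p : X ⟶ X), p ≫ p = p → HasColimit (idempotentDiagram p)) :
    IsIdempotentComplete C where
  idempotents_split X p hp := by
    have := h X p hp
    obtain ⟨s, hs, hs'⟩ :=
      exists_section_of_isColimit (IdempotentShape.coconeId hp)
        (colimit.isColimit (idempotentDiagram p))
    exact ⟨_, s, _, hs, hs'⟩

lemma isRelPresentable_self {C : Type u} [Category.{v} C] (κ : Cardinal.{v}) (A : C) :
    IsRelPresentable κ κ A := fun J _ hsmall hfilt =>
  let ⟨t⟩ := hfilt J hsmall (𝟭 J)
  ⟨preservesColimitsOfShape_of_cocone_id t _⟩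

/-- An essentially small category is `(κ,κ)`-accessibly generated iff it is
idempotent-complete. -/
theorem stmt14 (κ : Cardinal.{v}) (hκ : κ.IsRegular)
    (C : Type u) [Category.{v} C] [EssentiallySmall.{v} C] :
    AccessiblyGenerated C κ κ ↔ IsIdempotentComplete C := by
  constructor
  · rintro ⟨-, hcolim, -⟩
    exact isIdempotentComplete_of_hasColimit_idempotentDiagram fun X p hp =>
      hcolim _ (IdempotentShape.cardSmallCat hp hκ.aleph0_le)
        (isCardFiltered_of_cocone_id (IdempotentShape.coconeId hp) κ) _
  · intro _
    refine ⟨inferInstance, fun J _ hsmall hfilt F => ?_, fun X => ?_⟩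
    · obtain ⟨t⟩ := hfilt J hsmall (𝟭 J)
      exact hasColimit_of_cocone_id t F
    · exact ⟨Discrete PUnit, inferInstance, _, constCocone _ X,
        cardSmallCat_of_finite _ hκ.aleph0_le,
        isCardFiltered_of_cocone_id (IsFiltered.cocone (𝟭 _)) κ,
        fun _ => isRelPresentable_self κ _, ⟨isColimitConstCocone _ X⟩, ⟨Iso.refl X⟩⟩
end
end

section
/- Let C be a category with colimits of small κ-filtered diagrams, and I a set of morphisms of C whose domains and codomains are all κ-presentable. Then the class I^⧄ of morphisms with the right lifting property with respect to I, regarded as a full subcategory of the arrow category Fun(2, C), is closed under colimits of small κ-filtered diagrams in Fun(2, C). -/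
universe v u u₂

open CategoryTheory Limits Opposite

noncomputable section

/-- The class of morphisms with the right lifting property with respect to `I`. -/
def RLPclass {M : Type u} [Category.{v} M] (I : MorphismProperty M) : MorphismProperty M :=
  fun _ _ f => ∀ ⦃A B : M⦄ (g : A ⟶ B), I g → HasLiftingProperty g f

/-!
A commutative square from `g : A ⟶ B` to the colimit arrow is a morphism `Arrow.mk g ⟶ c.pt`.
Colimits in `Arrow C` are computed pointwise, so as `A` and `B` are `κ`-presentable its two
components factor through some stages of the diagram; since `A` is presentable, the two
composites `A ⟶ (F.obj j).right` that the square identifies in the colimit already agree at a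
later stage `k`, where we get a commutative square into `F.obj k`. A lift for that square,
followed by the colimit injection, lifts the original one.
-/

lemma isFiltered_of_isCardFiltered {J : Type v} [SmallCategory J] {κ : Cardinal.{v}}
    (hκ : Cardinal.aleph0 ≤ κ) (hJ : IsCardFiltered J κ) : IsFiltered J := by
  refine IsFiltered.of_cocone_nonempty.{v} _ fun {K} _ _ G => hJ K ?_ G
  have : Finite (Σ p : K × K, p.1 ⟶ p.2) := by
    have := FinCategory.fintypeObj (J := K)
    have (p : K × K) : Finite (p.1 ⟶ p.2) := by
      have := FinCategory.fintypeHom (J := K) p.1 p.2; infer_instance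
    infer_instance
  exact (Cardinal.lt_aleph0_of_finite _).trans_le hκ

section

variable {C : Type u} [Category.{v} C] {J : Type v} [SmallCategory J] {F : J ⥤ Arrow C}

lemma Arrow.exists_hom_of_isColimit [IsFiltered J] {c : Cocone F}
    (hL : IsColimit (Arrow.leftFunc.mapCocone c)) (hR : IsColimit (Arrow.rightFunc.mapCocone c))
    {X : Arrow C} [PreservesColimitsOfShape J (coyoneda.obj (op X.left))]
    [PreservesColimitsOfShape J (coyoneda.obj (op X.right))] (φ : X ⟶ c.pt) :
    ∃ (j : J) (ψ : X ⟶ F.obj j), ψ ≫ c.ι.app j = φ := by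
  obtain ⟨j₁, p, hp⟩ : ∃ (j : J) (p : X.left ⟶ (F.obj j).left), p ≫ (c.ι.app j).left = φ.left :=
    exists_hom_of_preservesColimit_coyoneda hL φ.left
  obtain ⟨j₂, q, hq⟩ : ∃ (j : J) (q : X.right ⟶ (F.obj j).right), q ≫ (c.ι.app j).right = φ.right :=
    exists_hom_of_preservesColimit_coyoneda hR φ.right
  have hpq : (p ≫ (F.obj j₁).hom) ≫ (c.ι.app j₁).right = (X.hom ≫ q) ≫ (c.ι.app j₂).right := by
    have h1 : (c.ι.app j₁).left ≫ c.pt.hom = (F.obj j₁).hom ≫ (c.ι.app j₁).right :=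
      Arrow.w (c.ι.app j₁)
    rw [Category.assoc, ← h1, ← Category.assoc, hp, Arrow.w φ, Category.assoc, hq]
  obtain ⟨k, a, b, hab⟩ := exists_eq_of_preservesColimit_coyoneda hR _ _ hpq
  refine ⟨k, Arrow.homMk (p ≫ (F.map a).left) (q ≫ (F.map b).right) ?_, ?_⟩
  · change (p ≫ (F.obj j₁).hom) ≫ (F.map a).right = (X.hom ≫ q) ≫ (F.map b).right at hab
    have h1 : (F.map a).left ≫ (F.obj k).hom = (F.obj j₁).hom ≫ (F.map a).right :=
      Arrow.w (F.map a)
    rw [Category.assoc, h1, ← Category.assoc, hab, Category.assoc]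
  · ext
    · change (p ≫ (F.map a).left) ≫ (c.ι.app k).left = φ.left
      rw [Category.assoc, ← Arrow.comp_left, c.w, hp]
    · change (q ≫ (F.map b).right) ≫ (c.ι.app k).right = φ.right
      rw [Category.assoc, ← Arrow.comp_right, c.w, hq]

lemma hasLiftingProperty_of_factorsThrough_cocone (c : Cocone F) {A B : C} (g : A ⟶ B)
    [∀ j, HasLiftingProperty g (F.obj j).hom]
    (hfac : ∀ φ : Arrow.mk g ⟶ c.pt, ∃ (j : J) (ψ : Arrow.mk g ⟶ F.obj j), ψ ≫ c.ι.app j = φ) :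
    HasLiftingProperty g c.pt.hom := by
  refine ⟨fun {u v} sq => ?_⟩
  obtain ⟨j, ψ, hψ⟩ := hfac (Arrow.homMk u v sq.w)
  have sqj : CommSq ψ.left g (F.obj j).hom ψ.right := ⟨Arrow.w ψ⟩
  have hu : ψ.left ≫ (c.ι.app j).left = u := congrArg Arrow.Hom.left hψ
  have hv : ψ.right ≫ (c.ι.app j).right = v := congrArg Arrow.Hom.right hψ
  exact ⟨⟨{ l := sqj.lift ≫ (c.ι.app j).left
            fac_left := by rw [sqj.fac_left_assoc, hu]
            fac_right := by
              have h1 : (c.ι.app j).left ≫ c.pt.hom = (F.obj j).hom ≫ (c.ι.app j).right :=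
                Arrow.w (c.ι.app j)
              rw [Category.assoc, h1, sqj.fac_right_assoc, hv] }⟩⟩

end

/-- If the (co)domains of `I` are `κ`-presentable, `I^⧄` is closed under small `κ`-filtered
colimits in the arrow category. -/
theorem stmt15 {C : Type u} [Category.{v} C] (κ : Cardinal.{v}) (hκ : κ.IsRegular)
    (hcolim : ∀ (J : Type v) [SmallCategory J], IsCardFiltered J κ → HasColimitsOfShape J C)
    (I : MorphismProperty C)
    (hI : ∀ ⦃X Y : C⦄ (f : X ⟶ Y), I f → IsCardPresentable κ X ∧ IsCardPresentable κ Y) :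
    ∀ (J : Type v) [SmallCategory J], IsCardFiltered J κ →
      ∀ (F : J ⥤ Arrow C), (∀ j, RLPclass I (F.obj j).hom) →
        ∀ (c : Cocone F), Nonempty (IsColimit c) → RLPclass I c.pt.hom := by
  intro J _ hJ F hF c ⟨hc⟩ A B g hg
  have := hcolim J hJ
  have := isFiltered_of_isCardFiltered hκ.aleph0_le hJ
  have := fun j => hF j g hg
  obtain ⟨hA, hB⟩ := hI g hg
  have : PreservesColimitsOfShape J (coyoneda.obj (op (Arrow.mk g).left)) := (hA J hJ).some
  have : PreservesColimitsOfShape J (coyoneda.obj (op (Arrow.mk g).right)) := (hB J hJ).some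
  exact hasLiftingProperty_of_factorsThrough_cocone c g
    (Arrow.exists_hom_of_isColimit (isColimitOfPreserves Arrow.leftFunc hc)
      (isColimitOfPreserves Arrow.rightFunc hc))
end
end

section
/- Let (L, R) be a functorial factorisation system on a category C such that for all morphisms h, k, the morphism L(k) has the left lifting property with respect to R(h). Then the pair (L-class, R-class), where a morphism g is in the left class iff there exists i with i ∘ g = L(g) and R(g) ∘ i = id, and f is in the right class iff there exists r with f ∘ r = R(f) and r ∘ L(f) = id, is a weak factorisation system on C extending (L, R). -/
/-!
A morphism `f` lies in the left class exactly when it is a retract of `L f` by the retraction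
spelled out in the definition (identity on the domain, `R f` on the codomain), and dually for
the right class. Lifting properties pass to retracts, so the hypothesis that every `L k` lifts
against every `R h` makes the two classes lift against each other. Conversely, lifting `f`
against `R f` (resp. `L f` against `f`) in the square expressing `f = R f ∘ L f` produces
exactly the witness required for membership in the left (resp. right) class.
-/

universe v u u₂

open CategoryTheory Limits Opposite

noncomputable section

/-- A functorial factorisation system on `C`. -/
structure FFact (C : Type u) [Category.{v} C] where
  Z : Arrow C ⥤ C
  ι : Arrow.leftFunc ⟶ Z
  π : Z ⟶ Arrow.rightFunc
  fac : ∀ f : Arrow C, ι.app f ≫ π.app f = f.hom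

/-- The left class associated to a functorial factorisation system. -/
def FFact.leftClass {C : Type u} [Category.{v} C] (D : FFact C) : MorphismProperty C :=
  fun _ Y g => ∃ i : Y ⟶ D.Z.obj (Arrow.mk g),
    g ≫ i = D.ι.app (Arrow.mk g) ∧ i ≫ D.π.app (Arrow.mk g) = 𝟙 Y

/-- The right class associated to a functorial factorisation system. -/
def FFact.rightClass {C : Type u} [Category.{v} C] (D : FFact C) : MorphismProperty C :=
  fun X _ f => ∃ r : D.Z.obj (Arrow.mk f) ⟶ X,
    D.ι.app (Arrow.mk f) ≫ r = 𝟙 X ∧ r ≫ f = D.π.app (Arrow.mk f)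

/-- `(L, R)` is a weak factorisation system. -/
structure IsWFS {M : Type u} [Category.{v} M] (L R : MorphismProperty M) : Prop where
  fac : ∀ ⦃X Y : M⦄ (f : X ⟶ Y), ∃ (Z : M) (g : X ⟶ Z) (h : Z ⟶ Y), L g ∧ R h ∧ g ≫ h = f
  llp : ∀ ⦃X Y : M⦄ (f : X ⟶ Y),
    (L f ↔ ∀ ⦃A B : M⦄ (g : A ⟶ B), R g → HasLiftingProperty f g)
  rlp : ∀ ⦃X Y : M⦄ (f : X ⟶ Y),
    (R f ↔ ∀ ⦃A B : M⦄ (g : A ⟶ B), L g → HasLiftingProperty g f)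

namespace FFact

variable {C : Type u} [Category.{v} C] (D : FFact C)

lemma ι_comp_π {X Y : C} (f : X ⟶ Y) : D.ι.app (Arrow.mk f) ≫ D.π.app (Arrow.mk f) = f :=
  D.fac (Arrow.mk f)

lemma leftClass_of_hasLiftingProperty {X Y : C} (f : X ⟶ Y)
    (h : HasLiftingProperty f (D.π.app (Arrow.mk f))) : D.leftClass f :=
  have sq : CommSq (D.ι.app (Arrow.mk f)) f (D.π.app (Arrow.mk f)) (𝟙 Y) :=
    ⟨(D.ι_comp_π f).trans (Category.comp_id f).symm⟩
  let ⟨⟨l⟩⟩ := h.sq_hasLift sq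
  ⟨l.l, l.fac_left, l.fac_right⟩

lemma rightClass_of_hasLiftingProperty {X Y : C} (f : X ⟶ Y)
    (h : HasLiftingProperty (D.ι.app (Arrow.mk f)) f) : D.rightClass f :=
  have sq : CommSq (𝟙 X) (D.ι.app (Arrow.mk f)) f (D.π.app (Arrow.mk f)) :=
    ⟨(Category.id_comp f).trans (D.ι_comp_π f).symm⟩
  let ⟨⟨l⟩⟩ := h.sq_hasLift sq
  ⟨l.l, l.fac_left, l.fac_right⟩

lemma hasLiftingProperty_of_leftClass {X Y A B : C} {f : X ⟶ Y} (hf : D.leftClass f)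
    {g : A ⟶ B} (h : HasLiftingProperty (D.ι.app (Arrow.mk f)) g) : HasLiftingProperty f g := by
  obtain ⟨i, hi, hiπ⟩ := hf
  have retract : RetractArrow f (D.ι.app (Arrow.mk f)) :=
    { i := Arrow.homMk' (𝟙 X) i ((Category.id_comp _).trans hi.symm)
      r := Arrow.homMk' (𝟙 X) (D.π.app (Arrow.mk f))
        ((Category.id_comp f).trans (D.ι_comp_π f).symm)
      retract := by ext; exacts [Category.comp_id _, hiπ] }
  exact retract.leftLiftingProperty g

lemma hasLiftingProperty_of_rightClass {X Y A B : C} {g : X ⟶ Y} (hg : D.rightClass g)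
    {f : A ⟶ B} (h : HasLiftingProperty f (D.π.app (Arrow.mk g))) : HasLiftingProperty f g := by
  obtain ⟨r, hιr, hr⟩ := hg
  have retract : RetractArrow g (D.π.app (Arrow.mk g)) :=
    { i := Arrow.homMk' (D.ι.app (Arrow.mk g)) (𝟙 Y)
        ((D.ι_comp_π g).trans (Category.comp_id g).symm)
      r := Arrow.homMk' r (𝟙 Y) (hr.trans (Category.comp_id _).symm)
      retract := by ext; exacts [hιr, Category.comp_id _] }
  exact retract.rightLiftingProperty f

lemma ι_mem_leftClass (hlift : ∀ f g : Arrow C, HasLiftingProperty (D.ι.app g) (D.π.app f))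
    (f : Arrow C) : D.leftClass (D.ι.app f) :=
  D.leftClass_of_hasLiftingProperty _ (hlift _ f)

lemma π_mem_rightClass (hlift : ∀ f g : Arrow C, HasLiftingProperty (D.ι.app g) (D.π.app f))
    (f : Arrow C) : D.rightClass (D.π.app f) :=
  D.rightClass_of_hasLiftingProperty _ (hlift f _)

lemma hasLiftingProperty_of_leftClass_of_rightClass
    (hlift : ∀ f g : Arrow C, HasLiftingProperty (D.ι.app g) (D.π.app f))
    {X Y A B : C} {f : X ⟶ Y} {g : A ⟶ B} (hf : D.leftClass f) (hg : D.rightClass g) :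
    HasLiftingProperty f g :=
  D.hasLiftingProperty_of_leftClass hf (D.hasLiftingProperty_of_rightClass hg (hlift _ _))

end FFact

/-- A functorial factorisation with the mutual lifting property induces a weak factorisation
system extending it. -/
theorem stmt17 {C : Type u} [Category.{v} C] (D : FFact C)
    (hlift : ∀ f g : Arrow C, HasLiftingProperty (D.ι.app g) (D.π.app f)) :
    IsWFS D.leftClass D.rightClass ∧
      ∀ f : Arrow C, D.leftClass (D.ι.app f) ∧ D.rightClass (D.π.app f) := by
  refine ⟨⟨fun X Y f => ?_, fun X Y f => ⟨?_, ?_⟩, fun X Y f => ⟨?_, ?_⟩⟩,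
    fun f => ⟨D.ι_mem_leftClass hlift f, D.π_mem_rightClass hlift f⟩⟩
  · exact ⟨_, _, _, D.ι_mem_leftClass hlift _, D.π_mem_rightClass hlift _, D.ι_comp_π f⟩
  · exact fun hf _ _ _ hg => D.hasLiftingProperty_of_leftClass_of_rightClass hlift hf hg
  · exact fun h => D.leftClass_of_hasLiftingProperty f (h _ (D.π_mem_rightClass hlift _))
  · exact fun hf _ _ _ hg => D.hasLiftingProperty_of_leftClass_of_rightClass hlift hg hf
  · exact fun h => D.rightClass_of_hasLiftingProperty f (h _ (D.ι_mem_leftClass hlift _))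
end
end
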